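/- arXiv:2107.11690 — 8 statements merged into one kernel-verified Lean document; each statement's English description precedes it below -/
import Mathlib

section
/- The limit x_∞ = lim_{t→∞} x(t) of a solution of the uncontrolled SIR system x' = -γσ₀xy, y' = γσ₀xy - γy with initial condition (x₀, y₀), x₀ > 0, y₀ > 0, satisfies x_∞ < 1/σ₀. -/
/-!
If `x_∞ ≥ 1/σ₀`, then, `x` being decreasing, `σ₀ x(t) ≥ 1` for all `t ≥ 0`, so
`y' = γ y (σ₀ x - 1) ≥ 0` and `y` is nondecreasing. Then `0 < y(0) ≤ lim y = 0`, a contradiction.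
-/

open Filter Set

section OrderLimits

variable {α β : Type*} [Preorder α] [IsDirectedOrder α] [TopologicalSpace β] [Preorder β]
  [OrderClosedTopology β] {f : α → β} {a b : α} {l : β}

theorem MonotoneOn.ge_of_tendsto_atTop (hf : MonotoneOn f (Ici a))
    (hl : Tendsto f atTop (nhds l)) (hb : a ≤ b) : f b ≤ l :=
  have : Nonempty α := ⟨a⟩
  ge_of_tendsto hl <| (eventually_ge_atTop b).mono fun _ hc => hf hb (hb.trans hc) hc

theorem AntitoneOn.le_of_tendsto_atTop (hf : AntitoneOn f (Ici a))
    (hl : Tendsto f atTop (nhds l)) (hb : a ≤ b) : l ≤ f b :=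
  have : Nonempty α := ⟨a⟩
  le_of_tendsto hl <| (eventually_ge_atTop b).mono fun _ hc => hf hb (hb.trans hc) hc

end OrderLimits

theorem Convex.monotoneOn_of_hasDerivAt_nonneg {D : Set ℝ} (hD : Convex ℝ D) {f f' : ℝ → ℝ}
    (hf : ∀ t ∈ D, HasDerivAt f (f' t) t) (hf' : ∀ t ∈ D, 0 ≤ f' t) : MonotoneOn f D :=
  monotoneOn_of_hasDerivWithinAt_nonneg hD
    (fun t ht => (hf t ht).continuousAt.continuousWithinAt)
    (fun t ht => (hf t (interior_subset ht)).hasDerivWithinAt)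
    (fun t ht => hf' t (interior_subset ht))

theorem sir_infected_monotoneOn {γ σ₀ : ℝ} (hγ : 0 ≤ γ) {x y : ℝ → ℝ} {D : Set ℝ}
    (hD : Convex ℝ D) (hy : ∀ t ∈ D, HasDerivAt y (γ * σ₀ * x t * y t - γ * y t) t)
    (hy_nonneg : ∀ t ∈ D, 0 ≤ y t) (hx : ∀ t ∈ D, 1 ≤ σ₀ * x t) : MonotoneOn y D :=
  hD.monotoneOn_of_hasDerivAt_nonneg hy fun t ht => by
    have h := mul_nonneg (mul_nonneg hγ (hy_nonneg t ht)) (sub_nonneg.2 (hx t ht))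
    linarith

theorem sir_limit_lt_inv_sigma_general (γ σ₀ : ℝ) (hγ : 0 < γ) (hσ₀ : 0 < σ₀)
    (x y : ℝ → ℝ) (hy0 : 0 < y 0)
    (hy : ∀ t ∈ Set.Ici (0:ℝ), HasDerivAt y (γ * σ₀ * x t * y t - γ * y t) t)
    (hpos : ∀ t ∈ Set.Ici (0:ℝ), 0 < x t ∧ 0 < y t)
    (hanti : AntitoneOn x (Set.Ici 0))
    (xinf : ℝ)
    (hxlim : Filter.Tendsto x Filter.atTop (nhds xinf))
    (hylim : Filter.Tendsto y Filter.atTop (nhds 0)) :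
    xinf < 1 / σ₀ := by
  by_contra! h
  have hσx : ∀ t ∈ Ici (0:ℝ), 1 ≤ σ₀ * x t := fun t ht => by
    have hxt := hanti.le_of_tendsto_atTop hxlim ht
    rw [div_le_iff₀ hσ₀] at h
    nlinarith
  have hy_mono : MonotoneOn y (Ici 0) :=
    sir_infected_monotoneOn hγ.le (convex_Ici 0) hy (fun t ht => (hpos t ht).2.le) hσx
  linarith [hy_mono.ge_of_tendsto_atTop hylim le_rfl]

/-- The long-time limit x_∞ of the uncontrolled SIR system satisfies x_∞ < 1/σ₀. -/
theorem sir_limit_lt_inv_sigma (γ σ₀ : ℝ) (hγ : 0 < γ) (hσ₀ : 0 < σ₀)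
    (x y : ℝ → ℝ) (hx0 : 0 < x 0) (hy0 : 0 < y 0)
    (hx : ∀ t ∈ Set.Ici (0:ℝ), HasDerivAt x (-(γ * σ₀ * x t * y t)) t)
    (hy : ∀ t ∈ Set.Ici (0:ℝ), HasDerivAt y (γ * σ₀ * x t * y t - γ * y t) t)
    (hpos : ∀ t ∈ Set.Ici (0:ℝ), 0 < x t ∧ 0 < y t)
    (hanti : AntitoneOn x (Set.Ici 0))
    (xinf : ℝ)
    (hxlim : Filter.Tendsto x Filter.atTop (nhds xinf))
    (hylim : Filter.Tendsto y Filter.atTop (nhds 0))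
    (hcons : ∀ s t : ℝ, 0 ≤ s → 0 ≤ t →
      x s * Real.exp (-σ₀ * (x s + y s)) = x t * Real.exp (-σ₀ * (x t + y t))) :
    xinf < 1 / σ₀ :=
  sir_limit_lt_inv_sigma_general γ σ₀ hγ hσ₀ x y hy0 hy hpos hanti xinf hxlim hylim
end

section
/- The partial derivative of x_∞(x, y, σ₀) with respect to x equals ((1 - σ₀x)/x) · x_∞/(1 - σ₀x_∞), and the partial derivative with respect to y equals -σ₀ x_∞/(1 - σ₀ x_∞). -/
/-!
Write `F u = u e^{-σ₀ u}` and `H(x, y) = x e^{-σ₀ (x + y)}`, so that `F (x_∞ x y) = H x y`.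
Since `F' u = (1 - σ₀ u) e^{-σ₀ u}` is positive on `(0, 1/σ₀)`, `F` is injective there, and the
inverse function theorem writes `x_∞` near any point as a local inverse of `F` composed with `H`.
The chain rule gives `∂x_∞ = ∂H / F'(x_∞)`, and since `F'(x_∞) = (1 - σ₀ x_∞) H / x_∞` this is
`(∂H / H) · x_∞ / (1 - σ₀ x_∞)`, with `∂H / H` equal to `(1 - σ₀ x) / x` in `x` and `-σ₀` in `y`.
-/

open Real Filter Set Topology

theorem hasDerivAt_of_comp_eq_of_injOn {𝕜 : Type*} [NontriviallyNormedField 𝕜]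
    [CompleteSpace 𝕜] {F g H : 𝕜 → 𝕜} {s : Set 𝕜} {F' H' t : 𝕜} (hs : IsOpen s)
    (hFs : InjOn F s) (hF : HasStrictDerivAt F F' (g t)) (hF' : F' ≠ 0)
    (hH : HasDerivAt H H' t) (hg : ∀ᶠ t' in 𝓝 t, g t' ∈ s ∧ F (g t') = H t') :
    HasDerivAt g (H' / F') t := by
  set G := hF.localInverse F F' (g t) hF'
  have hFg : F (g t) = H t := hg.self_of_nhds.2
  have hG : HasStrictDerivAt G F'⁻¹ (H t) := hFg ▸ hF.to_localInverse hF'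
  have hGg : G (H t) = g t := hFg ▸ (hF.eventually_left_inverse hF').self_of_nhds
  have hGs : ∀ᶠ v in 𝓝 (H t), G v ∈ s :=
    hG.hasDerivAt.continuousAt.preimage_mem_nhds (hGg ▸ hs.mem_nhds hg.self_of_nhds.1)
  have hFG : ∀ᶠ v in 𝓝 (H t), F (G v) = v := hFg ▸ hF.eventually_right_inverse hF'
  have hgGH : G ∘ H =ᶠ[𝓝 t] g := by
    filter_upwards [hg, hH.continuousAt.eventually (hGs.and hFG)] with t' ⟨hgs, hgH⟩ ⟨hGHs, hFGH⟩
    exact hFs hGHs hgs (hFGH.trans hgH.symm)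
  exact ((hG.hasDerivAt.comp t hH).congr_of_eventuallyEq hgGH.symm).congr_deriv
    (div_eq_inv_mul H' F').symm

theorem hasStrictDerivAt_mul_exp_neg_mul (σ u : ℝ) :
    HasStrictDerivAt (fun v => v * exp (-σ * v)) ((1 - σ * u) * exp (-σ * u)) u := by
  have hexp := ((hasStrictDerivAt_id u).const_mul (-σ)).exp
  exact ((hasStrictDerivAt_id u).mul hexp).congr_deriv (by simp only [id_eq]; ring)

theorem strictMonoOn_mul_exp_neg_mul {σ : ℝ} (hσ : 0 < σ) :
    StrictMonoOn (fun v => v * exp (-σ * v)) (Iic (1 / σ)) := by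
  refine strictMonoOn_of_deriv_pos (convex_Iic _)
    (fun u _ => (hasStrictDerivAt_mul_exp_neg_mul σ u).hasDerivAt.continuousAt.continuousWithinAt)
    fun u hu => ?_
  rw [interior_Iic, mem_Iio, lt_div_iff₀ hσ] at hu
  rw [(hasStrictDerivAt_mul_exp_neg_mul σ u).hasDerivAt.deriv]
  exact mul_pos (by linarith) (exp_pos _)

theorem hasDerivAt_of_mul_exp_neg_mul_eq {σ : ℝ} (hσ : 0 < σ) {g H : ℝ → ℝ} {H' t : ℝ}
    (hH : HasDerivAt H H' t)
    (hg : ∀ᶠ t' in 𝓝 t, g t' ∈ Ioo 0 (1 / σ) ∧ g t' * exp (-σ * g t') = H t') :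
    HasDerivAt g (H' / H t * (g t / (1 - σ * g t))) t := by
  obtain ⟨⟨hg_pos, hg_lt⟩, hgH⟩ := hg.self_of_nhds
  have h1 : 0 < 1 - σ * g t := by
    rw [lt_div_iff₀ hσ] at hg_lt
    linarith
  have hd := hasDerivAt_of_comp_eq_of_injOn isOpen_Ioo
    ((strictMonoOn_mul_exp_neg_mul hσ).injOn.mono (Ioo_subset_Ioc_self.trans Ioc_subset_Iic_self))
    (hasStrictDerivAt_mul_exp_neg_mul σ (g t)) (by positivity) hH hg
  refine hd.congr_deriv ?_
  rw [← hgH]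
  field_simp

/-- Partial derivatives of x_∞(x,y,σ₀) with respect to x and y. -/
theorem xinf_partial_derivatives (σ₀ : ℝ) (hσ₀ : 0 < σ₀)
    (xinf : ℝ → ℝ → ℝ)
    (hdef : ∀ x y : ℝ, 0 < x → 0 < y →
      xinf x y ∈ Set.Ioo 0 (1/σ₀) ∧
      xinf x y * Real.exp (-σ₀ * xinf x y) = x * Real.exp (-σ₀ * (x + y)))
    (x y : ℝ) (hx : 0 < x) (hy : 0 < y) :
    HasDerivAt (fun x' => xinf x' y)
      ((1 - σ₀ * x) / x * (xinf x y / (1 - σ₀ * xinf x y))) x ∧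
    HasDerivAt (fun y' => xinf x y')
      (-(σ₀ * xinf x y) / (1 - σ₀ * xinf x y)) y := by
  constructor
  · have hH : HasDerivAt (fun x' => x' * exp (-σ₀ * (x' + y)))
        ((1 - σ₀ * x) * exp (-σ₀ * (x + y))) x :=
      (hasDerivAt_id' (x := x)).mul ((hasDerivAt_id' (x := x)).add_const y |>.const_mul (-σ₀)).exp
        |>.congr_deriv (by ring)
    convert hasDerivAt_of_mul_exp_neg_mul_eq hσ₀ hH
      ((eventually_gt_nhds hx).mono fun x' hx' => hdef x' y hx' hy) using 2
    field_simp
  · have hH : HasDerivAt (fun y' => x * exp (-σ₀ * (x + y')))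
        (x * (-σ₀ * exp (-σ₀ * (x + y)))) y :=
      ((hasDerivAt_id' (x := y)).const_add x |>.const_mul (-σ₀)).exp.const_mul x
        |>.congr_deriv (by ring)
    convert hasDerivAt_of_mul_exp_neg_mul_eq hσ₀ hH
      ((eventually_gt_nhds hy).mono fun y' hy' => hdef x y' hx hy') using 1
    field_simp
end

section
/- For any admissible trajectory of the controlled SIR system with σ(t) ∈ [σ₁, σ₂] ⊆ [0, σ₀], the map t ↦ x_∞(x(t), y(t), σ₀) is nondecreasing; in particular x_∞(x₀, y₀, σ₀) ≤ x_∞(x(T), y(T), σ₀) < 1/σ₀. -/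
/-!
Let `φ c u = u * exp (-c * u)`. Along the SIR flow the quantity `x * exp (-σ₀ * (x + y))` has
derivative `γ x y (σ₀ - σ) exp (-σ₀ * (x + y)) ≥ 0`, and `x_∞` is defined by
`φ σ₀ x_∞ = x * exp (-σ₀ * (x + y))`. Since `φ σ₀` is strictly increasing on `[0, 1/σ₀]`, where
`x_∞` takes its values, `x_∞` inherits the monotonicity of the Lyapunov quantity.
-/

open Real Set

lemma monotoneOn_of_strictMonoOn_comp {α β δ : Type*} [Preorder α] [LinearOrder β] [Preorder δ]
    {f : β → δ} {φ : α → β} {s : Set α} {S : Set β} (hf : StrictMonoOn f S)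
    (hφ : MapsTo φ s S) (hfφ : MonotoneOn (f ∘ φ) s) : MonotoneOn φ s :=
  fun _ ha _ hb hab => (hf.le_iff_le (hφ ha) (hφ hb)).mp (hfφ ha hb hab)

lemma hasDerivAt_mul_exp_neg_mul (c u : ℝ) :
    HasDerivAt (fun u => u * exp (-c * u)) ((1 - c * u) * exp (-c * u)) u := by
  refine ((hasDerivAt_id' u).mul ((hasDerivAt_id' u).const_mul (-c)).exp).congr_deriv ?_
  ring

lemma strictMonoOn_mul_exp_neg_mul_s6 {c : ℝ} (hc : 0 < c) :
    StrictMonoOn (fun u => u * exp (-c * u)) (Icc 0 (1 / c)) := by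
  refine strictMonoOn_of_hasDerivWithinAt_pos (convex_Icc _ _)
    (fun u _ => (hasDerivAt_mul_exp_neg_mul c u).continuousAt.continuousWithinAt)
    (fun u _ => (hasDerivAt_mul_exp_neg_mul c u).hasDerivWithinAt) fun u hu => ?_
  rw [interior_Icc, mem_Ioo, lt_div_iff₀ hc] at hu
  exact mul_pos (by linarith) (exp_pos _)

section SIR

variable {γ c : ℝ} {σ x y : ℝ → ℝ}

lemma hasDerivAt_sir_mul_exp {t : ℝ} (hx : HasDerivAt x (-(γ * σ t * x t * y t)) t)
    (hy : HasDerivAt y (γ * σ t * x t * y t - γ * y t) t) :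
    HasDerivAt (fun t => x t * exp (-c * (x t + y t)))
      (γ * (x t * y t) * (c - σ t) * exp (-c * (x t + y t))) t := by
  refine (hx.mul ((hx.add hy).const_mul (-c)).exp).congr_deriv ?_
  simp only [Pi.add_apply]
  ring

lemma monotoneOn_sir_mul_exp {s : Set ℝ} (hs : Convex ℝ s) (hγ : 0 ≤ γ)
    (hσ : ∀ t ∈ s, σ t ≤ c)
    (hx : ∀ t ∈ s, HasDerivAt x (-(γ * σ t * x t * y t)) t)
    (hy : ∀ t ∈ s, HasDerivAt y (γ * σ t * x t * y t - γ * y t) t)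
    (hxy : ∀ t ∈ s, 0 ≤ x t * y t) :
    MonotoneOn (fun t => x t * exp (-c * (x t + y t))) s := by
  have hderiv t (ht : t ∈ s) := hasDerivAt_sir_mul_exp (c := c) (hx t ht) (hy t ht)
  refine monotoneOn_of_hasDerivWithinAt_nonneg hs
    (fun t ht => (hderiv t ht).continuousAt.continuousWithinAt)
    (fun t ht => (hderiv t (interior_subset ht)).hasDerivWithinAt) fun t ht => ?_
  replace ht := interior_subset ht
  have hσt := sub_nonneg.2 (hσ t ht)
  have hxyt := hxy t ht
  positivity

end SIR

theorem xinf_monotone_along_trajectory_general (γ σ₀ σ₁ σ₂ T : ℝ) (hγ : 0 < γ) (hσ₀ : 0 < σ₀)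
    (h2 : σ₂ ≤ σ₀) (hT : 0 < T)
    (σ x y : ℝ → ℝ)
    (hσrange : ∀ t ∈ Set.Icc (0:ℝ) T, σ t ∈ Set.Icc σ₁ σ₂)
    (x₀ y₀ : ℝ) (hx0 : x 0 = x₀) (hy0 : y 0 = y₀)
    (hx : ∀ t ∈ Set.Icc (0:ℝ) T, HasDerivAt x (-(γ * σ t * x t * y t)) t)
    (hy : ∀ t ∈ Set.Icc (0:ℝ) T, HasDerivAt y (γ * σ t * x t * y t - γ * y t) t)
    (hpos : ∀ t ∈ Set.Icc (0:ℝ) T, 0 < x t ∧ 0 < y t)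
    (xinf : ℝ → ℝ → ℝ)
    (hdef : ∀ a b : ℝ, 0 < a → 0 < b →
      xinf a b ∈ Set.Ioo 0 (1/σ₀) ∧
      xinf a b * Real.exp (-σ₀ * xinf a b) = a * Real.exp (-σ₀ * (a + b))) :
    MonotoneOn (fun t => xinf (x t) (y t)) (Set.Icc 0 T) ∧
    xinf x₀ y₀ ≤ xinf (x T) (y T) ∧ xinf (x T) (y T) < 1/σ₀ := by
  have hxinf t (ht : t ∈ Icc 0 T) := hdef (x t) (y t) (hpos t ht).1 (hpos t ht).2
  have hlyapunov : MonotoneOn (fun t => x t * exp (-σ₀ * (x t + y t))) (Icc 0 T) :=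
    monotoneOn_sir_mul_exp (convex_Icc 0 T) hγ.le (fun t ht => (hσrange t ht).2.trans h2) hx hy
      fun t ht => (mul_pos (hpos t ht).1 (hpos t ht).2).le
  have hmono : MonotoneOn (fun t => xinf (x t) (y t)) (Icc 0 T) :=
    monotoneOn_of_strictMonoOn_comp (strictMonoOn_mul_exp_neg_mul_s6 hσ₀)
      (fun t ht => Ioo_subset_Icc_self (hxinf t ht).1)
      (hlyapunov.congr fun t ht => (hxinf t ht).2.symm)
  have hT_mem : T ∈ Icc 0 T := right_mem_Icc.2 hT.le
  refine ⟨hmono, ?_, (hxinf T hT_mem).1.2⟩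
  simpa only [hx0, hy0] using hmono (left_mem_Icc.2 hT.le) hT_mem hT.le

/-- Along any admissible trajectory of the controlled SIR system with σ(t) ∈ [σ₁,σ₂] ⊆ [0,σ₀],
t ↦ x_∞(x(t),y(t),σ₀) is nondecreasing; in particular
x_∞(x₀,y₀,σ₀) ≤ x_∞(x(T),y(T),σ₀) < 1/σ₀. -/
theorem xinf_monotone_along_trajectory (γ σ₀ σ₁ σ₂ T : ℝ) (hγ : 0 < γ) (hσ₀ : 0 < σ₀)
    (h1 : 0 ≤ σ₁) (h12 : σ₁ ≤ σ₂) (h2 : σ₂ ≤ σ₀) (hT : 0 < T)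
    (σ x y : ℝ → ℝ)
    (hσrange : ∀ t ∈ Set.Icc (0:ℝ) T, σ t ∈ Set.Icc σ₁ σ₂)
    (x₀ y₀ : ℝ) (hx0 : x 0 = x₀) (hy0 : y 0 = y₀)
    (hD : 0 < x₀ ∧ 0 < y₀ ∧ x₀ + y₀ ≤ 1)
    (hx : ∀ t ∈ Set.Icc (0:ℝ) T, HasDerivAt x (-(γ * σ t * x t * y t)) t)
    (hy : ∀ t ∈ Set.Icc (0:ℝ) T, HasDerivAt y (γ * σ t * x t * y t - γ * y t) t)
    (hpos : ∀ t ∈ Set.Icc (0:ℝ) T, 0 < x t ∧ 0 < y t)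
    (xinf : ℝ → ℝ → ℝ)
    (hdef : ∀ a b : ℝ, 0 < a → 0 < b →
      xinf a b ∈ Set.Ioo 0 (1/σ₀) ∧
      xinf a b * Real.exp (-σ₀ * xinf a b) = a * Real.exp (-σ₀ * (a + b))) :
    MonotoneOn (fun t => xinf (x t) (y t)) (Set.Icc 0 T) ∧
    xinf x₀ y₀ ≤ xinf (x T) (y T) ∧ xinf (x T) (y T) < 1/σ₀ :=
  xinf_monotone_along_trajectory_general γ σ₀ σ₁ σ₂ T hγ hσ₀ h2 hT σ x y hσrange x₀ y₀ hx0 hy0 hx hy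
    hpos xinf hdef
end

section
/- Under the adjoint dynamics, a solution (λ₁(t), λ₂(t)) of the adjoint system satisfying the constancy-of-Hamiltonian condition σ*(t)φ(t) - γλ₂(t)y(t) = C cannot cross both semilines {λ₁ = λ₂ > 0} and {λ₁ = λ₂ < 0} on [0,T]. -/
/-!
On the diagonal `λ₁ = λ₂` the switching function reduces to `φ = κ + λ₃(T) ≥ 0`, so the bang-bang
rule gives `σ φ = σ₂ (κ + λ₃(T))` there whatever the value of `σ`. The constant Hamiltonian then
reads `C = σ₂ (κ + λ₃(T)) - γ λ₂ y` at every diagonal point, and since `γ y > 0` the sign of `λ₂`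
on the diagonal is determined by `C`: it cannot be positive at one point and negative at another.
-/

lemma mul_eq_of_pos_imp_eq {K s σ₂ : ℝ} (hK : 0 ≤ K) (hs : 0 < K → s = σ₂) :
    s * K = σ₂ * K := by
  rcases hK.eq_or_lt with hK | hK
  · simp [← hK]
  · rw [hs hK]

theorem adjoint_cannot_cross_both_semilines_general (γ σ₁ σ₂ κ lam₃T C T : ℝ)
    (hγ : 0 < γ) (hκl : 0 ≤ κ + lam₃T)
    (σ x y lam₁ lam₂ : ℝ → ℝ)
    (hpos : ∀ t ∈ Set.Icc (0:ℝ) T, 0 < x t ∧ 0 < y t)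
    (hbb : ∀ t ∈ Set.Icc (0:ℝ) T,
      (0 < κ + lam₃T + γ * x t * y t * (lam₂ t - lam₁ t) → σ t = σ₂) ∧
      (κ + lam₃T + γ * x t * y t * (lam₂ t - lam₁ t) < 0 → σ t = σ₁))
    (hham : ∀ t ∈ Set.Icc (0:ℝ) T,
      σ t * (κ + lam₃T + γ * x t * y t * (lam₂ t - lam₁ t)) - γ * lam₂ t * y t = C) :
    ¬ ∃ s₁ ∈ Set.Icc (0:ℝ) T, ∃ s₂ ∈ Set.Icc (0:ℝ) T,
      (lam₁ s₁ = lam₂ s₁ ∧ 0 < lam₂ s₁) ∧ (lam₁ s₂ = lam₂ s₂ ∧ lam₂ s₂ < 0) := by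
  rintro ⟨s₁, hs₁, s₂, hs₂, ⟨he₁, hpos₁⟩, he₂, hneg₂⟩
  have hamiltonian_on_diagonal : ∀ s ∈ Set.Icc (0:ℝ) T, lam₁ s = lam₂ s →
      C = σ₂ * (κ + lam₃T) - γ * lam₂ s * y s := by
    intro s hs he
    have hφ : κ + lam₃T + γ * x s * y s * (lam₂ s - lam₁ s) = κ + lam₃T := by simp [he]
    rw [← hham s hs, hφ, mul_eq_of_pos_imp_eq hκl fun h => (hbb s hs).1 (by rwa [hφ])]
  have hC₁ := hamiltonian_on_diagonal s₁ hs₁ he₁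
  have hC₂ := hamiltonian_on_diagonal s₂ hs₂ he₂
  have h₁ : 0 < γ * lam₂ s₁ * y s₁ := mul_pos (mul_pos hγ hpos₁) (hpos s₁ hs₁).2
  have h₂ : γ * lam₂ s₂ * y s₂ < 0 :=
    mul_neg_of_neg_of_pos (mul_neg_of_pos_of_neg hγ hneg₂) (hpos s₂ hs₂).2
  linarith

/-- A solution of the adjoint system satisfying the constancy-of-Hamiltonian condition cannot
cross both semilines {λ₁ = λ₂ > 0} and {λ₁ = λ₂ < 0} on [0,T]. -/
theorem adjoint_cannot_cross_both_semilines (γ σ₁ σ₂ κ lam₃T C T : ℝ)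
    (hγ : 0 < γ) (h12 : σ₁ < σ₂) (hκl : 0 ≤ κ + lam₃T) (hT : 0 < T)
    (σ x y lam₁ lam₂ : ℝ → ℝ)
    (hpos : ∀ t ∈ Set.Icc (0:ℝ) T, 0 < x t ∧ 0 < y t)
    (hσrange : ∀ t ∈ Set.Icc (0:ℝ) T, σ t ∈ Set.Icc σ₁ σ₂)
    (hlam1 : ∀ t ∈ Set.Icc (0:ℝ) T,
      HasDerivAt lam₁ ((lam₁ t - lam₂ t) * γ * σ t * y t) t)
    (hlam2 : ∀ t ∈ Set.Icc (0:ℝ) T,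
      HasDerivAt lam₂ ((lam₁ t - lam₂ t) * γ * σ t * x t + γ * lam₂ t) t)
    (hbb : ∀ t ∈ Set.Icc (0:ℝ) T,
      (0 < κ + lam₃T + γ * x t * y t * (lam₂ t - lam₁ t) → σ t = σ₂) ∧
      (κ + lam₃T + γ * x t * y t * (lam₂ t - lam₁ t) < 0 → σ t = σ₁))
    (hham : ∀ t ∈ Set.Icc (0:ℝ) T,
      σ t * (κ + lam₃T + γ * x t * y t * (lam₂ t - lam₁ t)) - γ * lam₂ t * y t = C) :
    ¬ ∃ s₁ ∈ Set.Icc (0:ℝ) T, ∃ s₂ ∈ Set.Icc (0:ℝ) T,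
      (lam₁ s₁ = lam₂ s₁ ∧ 0 < lam₂ s₁) ∧ (lam₁ s₂ = lam₂ s₂ ∧ lam₂ s₂ < 0) :=
  adjoint_cannot_cross_both_semilines_general γ σ₁ σ₂ κ lam₃T C T hγ hκl σ x y lam₁ lam₂ hpos hbb
    hham
end

section
/- Let σ* be an optimal control on [0,T] with σ*(t) = σ₂ on [T-δ, T] for some δ > 0, and suppose κ(1 - σ₀x_∞) < γ y*(T) x_∞ where x_∞ = x_∞(x*(T), y*(T), σ₀). Then ∫₀ᵀ σ*(t) dt = σ₁τ + σ₂(T - τ), i.e. the isoperimetric constraint is active. -/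
/-! If the multiplier β of the integral constraint vanished, the terminal switching function
κ + β - γ y(T) x_∞ / (1 - σ₀ x_∞) would be negative by the bound on κ, forcing σ(T) = σ₁;
but σ = σ₂ ≠ σ₁ near T. Hence β ≠ 0, and complementary slackness makes the constraint active. -/

lemma sub_div_neg_of_mul_lt {a b c : ℝ} (hc : 0 < c) (h : a * c < b) : a - b / c < 0 :=
  sub_neg.mpr ((lt_div_iff₀ hc).mpr h)

lemma one_sub_mul_pos_of_lt_one_div {a x : ℝ} (ha : 0 < a) (hx : x < 1 / a) : 0 < 1 - a * x :=
  sub_pos.mpr ((lt_div_iff₀' ha).mp hx)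

theorem isoperimetric_constraint_active_general (γ σ₀ σ₁ σ₂ κ τ T δ β xinfv : ℝ)
    (hσ₀ : 0 < σ₀) (h12 : σ₁ < σ₂)
    (hδ : 0 < δ)
    (hxinf : xinfv ∈ Set.Ioo 0 (1/σ₀))
    (σ y : ℝ → ℝ)
    (hκbound : κ * (1 - σ₀ * xinfv) < γ * y T * xinfv)
    (hσ2 : ∀ t ∈ Set.Icc (T - δ) T, σ t = σ₂)
    (hcs : β * ((∫ t in (0:ℝ)..T, σ t) - (σ₂ * (T - τ) + σ₁ * τ)) = 0)
    (hsign : κ + β - γ * y T * xinfv / (1 - σ₀ * xinfv) < 0 → σ T = σ₁) :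
    (∫ t in (0:ℝ)..T, σ t) = σ₁ * τ + σ₂ * (T - τ) := by
  have hσT : σ T = σ₂ := hσ2 T ⟨by linarith, le_rfl⟩
  have hβ : β ≠ 0 := by
    rintro rfl
    have hswitch := sub_div_neg_of_mul_lt (one_sub_mul_pos_of_lt_one_div hσ₀ hxinf.2) hκbound
    rw [← add_zero κ] at hswitch
    linarith [hsign hswitch]
  have hactive := (mul_eq_zero.mp hcs).resolve_left hβ
  linarith

/-- If an optimal control equals σ₂ on a final interval [T-δ,T] and
κ(1-σ₀x_∞) < γ y*(T) x_∞, then the isoperimetric constraint is active: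
∫₀ᵀ σ* = σ₁τ + σ₂(T-τ). -/
theorem isoperimetric_constraint_active (γ σ₀ σ₁ σ₂ κ τ T δ β xinfv : ℝ)
    (hγ : 0 < γ) (hσ₀ : 0 < σ₀) (h12 : σ₁ < σ₂) (hκ : 0 ≤ κ)
    (hτ : 0 < τ) (hτT : τ < T) (hδ : 0 < δ) (hδT : δ ≤ T)
    (hxinf : xinfv ∈ Set.Ioo 0 (1/σ₀))
    (σ y : ℝ → ℝ)
    (hyT : 0 < y T)
    (hκbound : κ * (1 - σ₀ * xinfv) < γ * y T * xinfv)
    (hσ2 : ∀ t ∈ Set.Icc (T - δ) T, σ t = σ₂)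
    (hβ : 0 ≤ β)
    (hcs : β * ((∫ t in (0:ℝ)..T, σ t) - (σ₂ * (T - τ) + σ₁ * τ)) = 0)
    (hconstr : (∫ t in (0:ℝ)..T, σ t) ≥ σ₁ * τ + σ₂ * (T - τ))
    (hsign : κ + β - γ * y T * xinfv / (1 - σ₀ * xinfv) < 0 → σ T = σ₁) :
    (∫ t in (0:ℝ)..T, σ t) = σ₁ * τ + σ₂ * (T - τ) :=
  isoperimetric_constraint_active_general γ σ₀ σ₁ σ₂ κ τ T δ β xinfv hσ₀ h12 hδ hxinf σ y hκbound
    hσ2 hcs hsign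
end

section
/- For i = 1, 2 and s in [t_i, t_{i+1}], the sensitivity u_i(s) = ∂Ψ₁/∂x_i − ∂Ψ₁/∂y_i of the SIR flow with constant control σ_i satisfies u_i(s) = x(s)/x_i + γσ_i (x(s)y(s)/x_i) ∫_{t_i}^{s} x(r)/y(r) dr, and u_i(s) + v_i(s) = (y(s)/x_i) γ ∫_{t_i}^{s} x(r)/y(r) dr, where v_i(s) = ∂Ψ₂/∂x_i − ∂Ψ₂/∂y_i. -/
/-!
Along a trajectory, `x e^{-σ(x+y)}` is a constant `c`, so `x = c e^{σS}` with `S = x + y`, and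
`S' = -γ y = -γ (S - c e^{σS})`. Separating variables gives, for all data `(a, b)` near
`(x_i, y_i)`, the implicit relation `∫_{S(s)}^{a+b} dτ / (γ (τ - c(a,b) e^{στ})) = s - t_i`.
Differentiating it in `a` and in `b` and subtracting, the terms from the upper endpoint `a + b`
cancel, which expresses `∂_a S - ∂_b S = u + v` through `∫ ∂_c (γ (τ - c e^{στ}))⁻¹ dτ`; the
substitution `τ = S(r)` turns this integral into `c⁻¹ ∫ x/y dr`. Differentiating `x = c e^{σS}`
in the same two directions then gives `u`.
-/

open Set Filter Topology MeasureTheory intervalIntegral Metric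
open scoped Interval

section Leibniz

variable {F F' : ℝ → ℝ → ℝ} {U : Set (ℝ × ℝ)}

lemma ContinuousOn.of_uncurry_right (hF : ContinuousOn (Function.uncurry F) U) {s : Set ℝ} {c : ℝ}
    (hs : ∀ τ ∈ s, (τ, c) ∈ U) : ContinuousOn (F · c) s :=
  hF.comp (by fun_prop) hs

lemma IsOpen.exists_cthickening_uIcc_prod_closedBall_subset (hU : IsOpen U) {l u c : ℝ}
    (h : ∀ τ ∈ uIcc l u, (τ, c) ∈ U) :
    ∃ δ > 0, cthickening δ (uIcc l u) ×ˢ closedBall c δ ⊆ U := by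
  obtain ⟨V, W, hV, hW, hlV, hcW, hVW⟩ := generalized_tube_lemma isCompact_uIcc
    isCompact_singleton hU (by rintro ⟨τ, c'⟩ ⟨hτ, rfl⟩; exact h τ hτ)
  obtain ⟨δ₁, hδ₁, hV'⟩ := isCompact_uIcc.exists_cthickening_subset_open hV hlV
  obtain ⟨δ₂, hδ₂, hW'⟩ := nhds_basis_closedBall.mem_iff.1 (hW.mem_nhds (hcW rfl))
  refine ⟨min δ₁ δ₂, lt_min hδ₁ hδ₂, ?_⟩
  refine Subset.trans (Set.prod_mono ?_ ?_) hVW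
  · exact (cthickening_mono (min_le_left _ _) _).trans hV'
  · exact (closedBall_subset_closedBall (min_le_right _ _)).trans hW'

theorem hasDerivAt_intervalIntegral_of_hasDerivAt_param (hU : IsOpen U)
    (hF : ContinuousOn (Function.uncurry F) U) (hF' : ContinuousOn (Function.uncurry F') U)
    (hFF' : ∀ p ∈ U, HasDerivAt (F p.1) (F' p.1 p.2) p.2) {p q c : ℝ}
    (h : ∀ τ ∈ uIcc p q, (τ, c) ∈ U) :
    HasDerivAt (fun c => ∫ τ in p..q, F τ c) (∫ τ in p..q, F' τ c) c := by
  obtain ⟨δ, hδ, hbox⟩ := hU.exists_cthickening_uIcc_prod_closedBall_subset h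
  have hB : uIcc p q ×ˢ closedBall c δ ⊆ U :=
    (Set.prod_mono (self_subset_cthickening _) le_rfl).trans hbox
  have hslice : ∀ c' ∈ closedBall c δ, ∀ τ ∈ uIcc p q, (τ, c') ∈ U :=
    fun c' hc' τ hτ => hB ⟨hτ, hc'⟩
  obtain ⟨M, hM⟩ := (isCompact_uIcc.prod (isCompact_closedBall c δ)).exists_bound_of_continuousOn
    (hF'.mono hB)
  have hmeas : ∀ G : ℝ → ℝ → ℝ, ContinuousOn (Function.uncurry G) U → ∀ c' ∈ closedBall c δ,
      AEStronglyMeasurable (G · c') (volume.restrict (Ι p q)) := fun G hG c' hc' =>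
    ((hG.of_uncurry_right (hslice c' hc')).mono uIoc_subset_uIcc).aestronglyMeasurable
      measurableSet_uIoc
  refine (hasDerivAt_integral_of_dominated_loc_of_deriv_le (F := fun c τ => F τ c)
    (F' := fun c τ => F' τ c) (bound := fun _ => M) (closedBall_mem_nhds c hδ)
    (eventually_of_mem (closedBall_mem_nhds c hδ) (hmeas F hF))
    ((hF.of_uncurry_right (hslice c (mem_closedBall_self hδ.le))).intervalIntegrable)
    (hmeas F' hF' c (mem_closedBall_self hδ.le)) ?_ intervalIntegrable_const ?_).2
  · exact Eventually.of_forall fun τ hτ c' hc' => hM (τ, c') ⟨uIoc_subset_uIcc hτ, hc'⟩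
  · exact Eventually.of_forall fun τ hτ c' hc' =>
      hFF' (τ, c') (hslice c' hc' τ (uIoc_subset_uIcc hτ))

theorem hasDerivAt_intervalIntegral_moving_endpoint (hU : IsOpen U)
    (hF : ContinuousOn (Function.uncurry F) U) {e C : ℝ → ℝ} {z e' : ℝ}
    (he : HasDerivAt e e' z) (hC : ContinuousAt C z) (hz : (e z, C z) ∈ U) :
    HasDerivAt (fun w => ∫ τ in e z..e w, F τ (C w)) (F (e z) (C z) * e') z := by
  set F₀ := F (e z) (C z)
  have hrem : (fun w => (∫ τ in e z..e w, F τ (C w)) - F₀ * (e w - e z))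
      =o[𝓝 z] fun w => e w - e z := by
    refine Asymptotics.isLittleO_iff.2 fun ε hε => ?_
    obtain ⟨ρ, hρ, hball⟩ := Metric.eventually_nhds_iff.1 ((hU.eventually_mem hz).and
      ((hF.continuousAt (hU.mem_nhds hz)).eventually_mem (closedBall_mem_nhds F₀ hε)))
    have hpath : Tendsto (fun w => (e w, C w)) (𝓝 z) (𝓝 (e z, C z)) :=
      he.continuousAt.prodMk_nhds hC
    filter_upwards [hpath (ball_mem_nhds _ hρ)] with w hw
    have hnear : ∀ τ ∈ uIcc (e z) (e w), (τ, C w) ∈ U ∧ dist (F τ (C w)) F₀ ≤ ε := by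
      refine fun τ hτ => hball (lt_of_le_of_lt ?_ (mem_ball.1 hw))
      rw [Prod.dist_eq, Prod.dist_eq, Real.dist_eq, Real.dist_eq]
      exact max_le_max_right _ (abs_sub_left_of_mem_uIcc hτ)
    have hint : IntervalIntegrable (F · (C w)) volume (e z) (e w) :=
      (hF.of_uncurry_right fun τ hτ => (hnear τ hτ).1).intervalIntegrable
    calc ‖(∫ τ in e z..e w, F τ (C w)) - F₀ * (e w - e z)‖
        = ‖∫ τ in e z..e w, (F τ (C w) - F₀)‖ := by
          rw [integral_sub hint intervalIntegrable_const, intervalIntegral.integral_const,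
            smul_eq_mul, mul_comm]
      _ ≤ ε * ‖e w - e z‖ := norm_integral_le_of_norm_le_const fun τ hτ =>
          (dist_eq_norm _ _).symm.le.trans (hnear τ (uIoc_subset_uIcc hτ)).2
  have hrem' : HasDerivAt (fun w => (∫ τ in e z..e w, F τ (C w)) - F₀ * (e w - e z)) 0 z := by
    rw [hasDerivAt_iff_isLittleO]
    simpa using hrem.trans_isBigO he.isBigO_sub
  have hsum := hrem'.add ((he.sub_const (e z)).const_mul F₀)
  rw [zero_add] at hsum
  exact hsum.congr_of_eventuallyEq (Eventually.of_forall fun w => by simp)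

theorem hasDerivAt_intervalIntegral_of_hasDerivAt_endpoints_param (hU : IsOpen U)
    (hF : ContinuousOn (Function.uncurry F) U) (hF' : ContinuousOn (Function.uncurry F') U)
    (hFF' : ∀ p ∈ U, HasDerivAt (F p.1) (F' p.1 p.2) p.2)
    {l u C : ℝ → ℝ} {z l' u' C' : ℝ}
    (hl : HasDerivAt l l' z) (hu : HasDerivAt u u' z) (hC : HasDerivAt C C' z)
    (hz : ∀ τ ∈ uIcc (l z) (u z), (τ, C z) ∈ U) :
    HasDerivAt (fun w => ∫ τ in l w..u w, F τ (C w))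
      ((∫ τ in l z..u z, F' τ (C z)) * C' + F (u z) (C z) * u' - F (l z) (C z) * l') z := by
  obtain ⟨δ, hδ, hbox⟩ := hU.exists_cthickening_uIcc_prod_closedBall_subset hz
  set K := cthickening δ (uIcc (l z) (u z))
  have hK : K.OrdConnected := convex_iff_ordConnected.1 ((convex_uIcc _ _).cthickening δ)
  have hKnhds : K ∈ 𝓝ˢ (uIcc (l z) (u z)) := cthickening_mem_nhdsSet _ hδ
  have hlz : l z ∈ K := self_subset_cthickening _ left_mem_uIcc
  have huz : u z ∈ K := self_subset_cthickening _ right_mem_uIcc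
  have hint : ∀ᶠ w in 𝓝 z, ∀ p ∈ K, ∀ q ∈ K, IntervalIntegrable (F · (C w)) volume p q := by
    filter_upwards [hC.continuousAt.eventually_mem (closedBall_mem_nhds _ hδ)] with w hw p hp q hq
    exact (hF.of_uncurry_right fun τ hτ => hbox ⟨hK.uIcc_subset hp hq hτ, hw⟩).intervalIntegrable
  have hsplit : (fun w => ∫ τ in l w..u w, F τ (C w)) =ᶠ[𝓝 z] fun w =>
      (∫ τ in l z..u z, F τ (C w)) + (∫ τ in u z..u w, F τ (C w)) -
        ∫ τ in l z..l w, F τ (C w) := by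
    filter_upwards [hint,
      hl.continuousAt.eventually_mem (mem_nhdsSet_iff_forall.1 hKnhds _ left_mem_uIcc),
      hu.continuousAt.eventually_mem (mem_nhdsSet_iff_forall.1 hKnhds _ right_mem_uIcc)]
      with w hw hlw huw
    have := integral_interval_sub_interval_comm' (hw _ hlw _ huw) (hw _ hlz _ huz) (hw _ hlw _ hlz)
    linarith
  have hparam := (hasDerivAt_intervalIntegral_of_hasDerivAt_param hU hF hF' hFF' hz).comp z hC
  exact ((hparam.add (hasDerivAt_intervalIntegral_moving_endpoint hU hF hu hC.continuousAt
    (hz _ right_mem_uIcc))).sub (hasDerivAt_intervalIntegral_moving_endpoint hU hF hl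
    hC.continuousAt (hz _ left_mem_uIcc))).congr_of_eventuallyEq hsplit

theorem mul_sub_eq_of_integral_eventually_eq (hU : IsOpen U)
    (hF : ContinuousOn (Function.uncurry F) U) (hF' : ContinuousOn (Function.uncurry F') U)
    (hFF' : ∀ p ∈ U, HasDerivAt (F p.1) (F' p.1 p.2) p.2)
    {S C : ℝ → ℝ → ℝ} {x₀ y₀ T Sa Sb Ca Cb : ℝ}
    (hT : ∀ᶠ p in 𝓝 (x₀, y₀), ∫ τ in S p.1 p.2..p.1 + p.2, F τ (C p.1 p.2) = T)
    (hSa : HasDerivAt (S · y₀) Sa x₀) (hSb : HasDerivAt (S x₀ ·) Sb y₀)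
    (hCa : HasDerivAt (C · y₀) Ca x₀) (hCb : HasDerivAt (C x₀ ·) Cb y₀)
    (hz : ∀ τ ∈ uIcc (S x₀ y₀) (x₀ + y₀), (τ, C x₀ y₀) ∈ U) :
    F (S x₀ y₀) (C x₀ y₀) * (Sa - Sb) =
      (∫ τ in S x₀ y₀..x₀ + y₀, F' τ (C x₀ y₀)) * (Ca - Cb) := by
  have ha := (hasDerivAt_intervalIntegral_of_hasDerivAt_endpoints_param hU hF hF' hFF' hSa
    ((hasDerivAt_id' x₀).add_const y₀) hCa hz).unique ((hasDerivAt_const x₀ T).congr_of_eventuallyEq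
      ((continuous_id.prodMk continuous_const).continuousAt.eventually hT))
  have hb := (hasDerivAt_intervalIntegral_of_hasDerivAt_endpoints_param hU hF hF' hFF' hSb
    ((hasDerivAt_id' y₀).const_add x₀) hCb hz).unique ((hasDerivAt_const y₀ T).congr_of_eventuallyEq
      ((continuous_const.prodMk continuous_id).continuousAt.eventually hT))
  linear_combination hb - ha

end Leibniz

section SeparationOfVariables

variable {S h : ℝ → ℝ} {t₀ t₁ : ℝ}

theorem integral_eq_integral_comp_mul_of_hasDerivAt_neg (ht : t₀ ≤ t₁)
    (hS : ∀ r ∈ Icc t₀ t₁, HasDerivAt S (-h (S r)) r) (hh : Continuous h) {g : ℝ → ℝ}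
    (hg : ContinuousOn g (S '' Icc t₀ t₁)) :
    ∫ τ in S t₁..S t₀, g τ = ∫ r in t₀..t₁, g (S r) * h (S r) := by
  rw [← uIcc_of_le ht] at hS hg
  have hcont : ContinuousOn (fun r => -h (S r)) (uIcc t₀ t₁) :=
    (hh.comp_continuousOn fun r hr => (hS r hr).continuousAt.continuousWithinAt).neg
  rw [integral_symm, ← integral_comp_mul_deriv' hS hcont hg, ← intervalIntegral.integral_neg]
  simp

theorem integral_inv_of_hasDerivAt_neg (ht : t₀ ≤ t₁)
    (hS : ∀ r ∈ Icc t₀ t₁, HasDerivAt S (-h (S r)) r) (hh : Continuous h)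
    (hne : ∀ r ∈ Icc t₀ t₁, h (S r) ≠ 0) :
    ∫ τ in S t₁..S t₀, (h τ)⁻¹ = t₁ - t₀ := by
  rw [integral_eq_integral_comp_mul_of_hasDerivAt_neg (g := fun τ => (h τ)⁻¹) ht hS hh
    (hh.continuousOn.inv₀ (by rintro _ ⟨r, hr, rfl⟩; exact hne r hr))]
  rw [integral_congr (g := fun _ => 1) fun r hr =>
    inv_mul_cancel₀ (hne r (by rwa [uIcc_of_le ht] at hr))]
  simp

end SeparationOfVariables

noncomputable def sirInvariant (σ x y : ℝ) : ℝ := x * Real.exp (-σ * (x + y))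

/-- On the level set `sirInvariant σ x y = c`, the sum `x + y` decreases at rate
`γ y = sirRate γ σ (x + y) c`. -/
noncomputable def sirRate (γ σ τ c : ℝ) : ℝ := γ * (τ - c * Real.exp (σ * τ))

section SIR

variable {γ σ : ℝ}

lemma hasDerivAt_sirInvariant_fst (x y : ℝ) :
    HasDerivAt (sirInvariant σ · y) ((1 - σ * x) * Real.exp (-σ * (x + y))) x := by
  have := (hasDerivAt_id' x).mul (((hasDerivAt_id' x).add_const y).const_mul (-σ)).exp
  exact this.congr_deriv (by ring)

lemma hasDerivAt_sirInvariant_snd (x y : ℝ) :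
    HasDerivAt (sirInvariant σ x ·) (-(σ * x) * Real.exp (-σ * (x + y))) y := by
  have := (((hasDerivAt_id' y).const_add x).const_mul (-σ)).exp.const_mul x
  exact this.congr_deriv (by ring)

lemma sirRate_add_sirInvariant (x y : ℝ) : sirRate γ σ (x + y) (sirInvariant σ x y) = γ * y := by
  rw [sirRate, sirInvariant, mul_assoc, ← Real.exp_add, neg_mul, neg_add_cancel, Real.exp_zero]
  ring

lemma continuous_sirRate : Continuous fun p : ℝ × ℝ => sirRate γ σ p.1 p.2 := by
  unfold sirRate; fun_prop

lemma hasDerivAt_inv_sirRate {τ c : ℝ} (h : sirRate γ σ τ c ≠ 0) :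
    HasDerivAt (fun c => (sirRate γ σ τ c)⁻¹) (γ * Real.exp (σ * τ) / sirRate γ σ τ c ^ 2) c := by
  have := ((((hasDerivAt_id' c).mul_const (Real.exp (σ * τ))).const_sub τ).const_mul γ).inv h
  exact this.congr_deriv (by rw [sirRate]; ring)

theorem inv_sirRate_mul_sub_eq {S : ℝ → ℝ → ℝ} {x₀ y₀ T Sa Sb : ℝ}
    (hT : ∀ᶠ p in 𝓝 (x₀, y₀),
      ∫ τ in S p.1 p.2..p.1 + p.2, (sirRate γ σ τ (sirInvariant σ p.1 p.2))⁻¹ = T)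
    (hSa : HasDerivAt (S · y₀) Sa x₀) (hSb : HasDerivAt (S x₀ ·) Sb y₀)
    (hz : ∀ τ ∈ uIcc (S x₀ y₀) (x₀ + y₀), sirRate γ σ τ (sirInvariant σ x₀ y₀) ≠ 0) :
    (sirRate γ σ (S x₀ y₀) (sirInvariant σ x₀ y₀))⁻¹ * (Sa - Sb) =
      (∫ τ in S x₀ y₀..x₀ + y₀,
        γ * Real.exp (σ * τ) / sirRate γ σ τ (sirInvariant σ x₀ y₀) ^ 2) *
        Real.exp (-σ * (x₀ + y₀)) := by
  have hU : IsOpen {p : ℝ × ℝ | sirRate γ σ p.1 p.2 ≠ 0} :=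
    isOpen_ne_fun continuous_sirRate continuous_const
  have hF : ContinuousOn (fun p : ℝ × ℝ => (sirRate γ σ p.1 p.2)⁻¹)
      {p : ℝ × ℝ | sirRate γ σ p.1 p.2 ≠ 0} :=
    continuous_sirRate.continuousOn.inv₀ fun _ hp => hp
  have hF' : ContinuousOn (fun p : ℝ × ℝ => γ * Real.exp (σ * p.1) / sirRate γ σ p.1 p.2 ^ 2)
      {p : ℝ × ℝ | sirRate γ σ p.1 p.2 ≠ 0} :=
    ContinuousOn.div (by fun_prop) (continuous_sirRate.pow 2).continuousOn
      fun _ hp => pow_ne_zero 2 hp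
  have := mul_sub_eq_of_integral_eventually_eq (F := fun τ c => (sirRate γ σ τ c)⁻¹)
    (F' := fun τ c => γ * Real.exp (σ * τ) / sirRate γ σ τ c ^ 2) hU hF hF'
    (fun _ hp => hasDerivAt_inv_sirRate hp)
    hT hSa hSb (hasDerivAt_sirInvariant_fst x₀ y₀) (hasDerivAt_sirInvariant_snd x₀ y₀) hz
  linear_combination this

theorem sub_eq_of_mul_exp_eq_sirInvariant {X S : ℝ → ℝ → ℝ} {x₀ y₀ Xa Xb Sa Sb : ℝ}
    (hx₀ : x₀ ≠ 0)
    (h : ∀ᶠ p in 𝓝 (x₀, y₀), X p.1 p.2 * Real.exp (-σ * S p.1 p.2) = sirInvariant σ p.1 p.2)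
    (hXa : HasDerivAt (X · y₀) Xa x₀) (hXb : HasDerivAt (X x₀ ·) Xb y₀)
    (hSa : HasDerivAt (S · y₀) Sa x₀) (hSb : HasDerivAt (S x₀ ·) Sb y₀) :
    Xa - Xb = X x₀ y₀ / x₀ + σ * X x₀ y₀ * (Sa - Sb) := by
  have ha := (hXa.mul (hSa.const_mul (-σ)).exp).unique
    ((hasDerivAt_sirInvariant_fst x₀ y₀).congr_of_eventuallyEq
      ((continuous_id.prodMk continuous_const).continuousAt.eventually h))
  have hb := (hXb.mul (hSb.const_mul (-σ)).exp).unique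
    ((hasDerivAt_sirInvariant_snd x₀ y₀).congr_of_eventuallyEq
      ((continuous_const.prodMk continuous_id).continuousAt.eventually h))
  have h₀ : X x₀ y₀ * Real.exp (-σ * S x₀ y₀) = x₀ * Real.exp (-σ * (x₀ + y₀)) := h.self_of_nhds
  have hE := Real.exp_pos (-σ * S x₀ y₀)
  have hcancel : ((Xa - Xb) * x₀ - (X x₀ y₀ + σ * X x₀ y₀ * (Sa - Sb) * x₀)) *
      Real.exp (-σ * S x₀ y₀) = 0 := by
    linear_combination x₀ * (ha - hb) - h₀
  field_simp
  linear_combination (mul_eq_zero.1 hcancel).resolve_right hE.ne'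

end SIR

structure IsSIRArc (γ σ c t₀ t₁ : ℝ) (x y : ℝ → ℝ) : Prop where
  hasDerivAt_fst : ∀ r ∈ Icc t₀ t₁, HasDerivAt x (-(γ * σ * x r * y r)) r
  hasDerivAt_snd : ∀ r ∈ Icc t₀ t₁, HasDerivAt y (γ * σ * x r * y r - γ * y r) r
  sirInvariant_eq : ∀ r ∈ Icc t₀ t₁, sirInvariant σ (x r) (y r) = c
  snd_pos : ∀ r ∈ Icc t₀ t₁, 0 < y r

namespace IsSIRArc

variable {γ σ c t₀ t₁ r : ℝ} {x y : ℝ → ℝ}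

lemma fst_eq (hxy : IsSIRArc γ σ c t₀ t₁ x y) (hr : r ∈ Icc t₀ t₁) :
    x r = c * Real.exp (σ * (x r + y r)) := by
  rw [← hxy.sirInvariant_eq r hr, sirInvariant, mul_assoc, ← Real.exp_add, neg_mul,
    neg_add_cancel, Real.exp_zero, mul_one]

lemma sirRate_eq (hxy : IsSIRArc γ σ c t₀ t₁ x y) (hr : r ∈ Icc t₀ t₁) :
    sirRate γ σ (x r + y r) c = γ * y r := by
  rw [← hxy.sirInvariant_eq r hr, sirRate_add_sirInvariant]

lemma sirRate_ne_zero (hxy : IsSIRArc γ σ c t₀ t₁ x y) (hγ : γ ≠ 0) (hr : r ∈ Icc t₀ t₁) :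
    sirRate γ σ (x r + y r) c ≠ 0 := by
  rw [hxy.sirRate_eq hr]
  exact mul_ne_zero hγ (hxy.snd_pos r hr).ne'

lemma hasDerivAt_add (hxy : IsSIRArc γ σ c t₀ t₁ x y) (hr : r ∈ Icc t₀ t₁) :
    HasDerivAt (fun r => x r + y r) (-sirRate γ σ (x r + y r) c) r := by
  rw [hxy.sirRate_eq hr]
  exact ((hxy.hasDerivAt_fst r hr).add (hxy.hasDerivAt_snd r hr)).congr_deriv (by ring)

lemma sirRate_ne_zero_of_mem_uIcc (hxy : IsSIRArc γ σ c t₀ t₁ x y) (hγ : γ ≠ 0) (ht : t₀ ≤ t₁)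
    {τ : ℝ} (hτ : τ ∈ uIcc (x t₁ + y t₁) (x t₀ + y t₀)) : sirRate γ σ τ c ≠ 0 := by
  have hcont : ContinuousOn (fun r => x r + y r) (uIcc t₁ t₀) := by
    rw [uIcc_of_ge ht]
    exact fun r hr => (hxy.hasDerivAt_add hr).continuousAt.continuousWithinAt
  obtain ⟨r, hr, rfl⟩ := intermediate_value_uIcc hcont hτ
  exact hxy.sirRate_ne_zero hγ (by rwa [uIcc_of_ge ht] at hr)

lemma integral_inv_sirRate (hxy : IsSIRArc γ σ c t₀ t₁ x y) (hγ : γ ≠ 0) (ht : t₀ ≤ t₁) :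
    ∫ τ in x t₁ + y t₁..x t₀ + y t₀, (sirRate γ σ τ c)⁻¹ = t₁ - t₀ :=
  integral_inv_of_hasDerivAt_neg (S := fun r => x r + y r) (h := (sirRate γ σ · c)) ht
    (fun _ hr => hxy.hasDerivAt_add hr) (by unfold sirRate; fun_prop)
    fun _ hr => hxy.sirRate_ne_zero hγ hr

lemma integral_div_sirRate_sq (hxy : IsSIRArc γ σ c t₀ t₁ x y) (hγ : γ ≠ 0) (ht : t₀ ≤ t₁)
    (hc : c ≠ 0) :
    ∫ τ in x t₁ + y t₁..x t₀ + y t₀, γ * Real.exp (σ * τ) / sirRate γ σ τ c ^ 2 =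
      c⁻¹ * ∫ r in t₀..t₁, x r / y r := by
  rw [integral_eq_integral_comp_mul_of_hasDerivAt_neg (S := fun r => x r + y r)
    (h := (sirRate γ σ · c)) ht (fun _ hr => hxy.hasDerivAt_add hr) (by unfold sirRate; fun_prop),
    ← intervalIntegral.integral_const_mul]
  · refine integral_congr fun r hr => ?_
    rw [uIcc_of_le ht] at hr
    have hy := (hxy.snd_pos r hr).ne'
    simp only [hxy.sirRate_eq hr]
    conv_rhs => rw [hxy.fst_eq hr]
    field_simp
  · refine ContinuousOn.div (by fun_prop) (by unfold sirRate; fun_prop) ?_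
    rintro _ ⟨r, hr, rfl⟩
    exact pow_ne_zero 2 (hxy.sirRate_ne_zero hγ hr)

end IsSIRArc

theorem IsSIRArc.sub_eq_mul_integral_div {γ σ t₀ t₁ x₀ y₀ Sa Sb : ℝ} {x y : ℝ → ℝ}
    {S : ℝ → ℝ → ℝ} (hxy : IsSIRArc γ σ (sirInvariant σ x₀ y₀) t₀ t₁ x y) (hγ : γ ≠ 0)
    (ht : t₀ ≤ t₁) (hx₀ : x₀ ≠ 0) (h₀ : x t₀ + y t₀ = x₀ + y₀) (hS : S x₀ y₀ = x t₁ + y t₁)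
    (hT : ∀ᶠ p in 𝓝 (x₀, y₀),
      ∫ τ in S p.1 p.2..p.1 + p.2, (sirRate γ σ τ (sirInvariant σ p.1 p.2))⁻¹ = t₁ - t₀)
    (hSa : HasDerivAt (S · y₀) Sa x₀) (hSb : HasDerivAt (S x₀ ·) Sb y₀) :
    Sa - Sb = y t₁ / x₀ * γ * ∫ r in t₀..t₁, x r / y r := by
  have hrel := inv_sirRate_mul_sub_eq hT hSa hSb fun τ hτ =>
    hxy.sirRate_ne_zero_of_mem_uIcc hγ ht (by rwa [hS, ← h₀] at hτ)
  have hI := hxy.integral_div_sirRate_sq hγ ht (mul_ne_zero hx₀ (Real.exp_pos _).ne')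
  rw [h₀] at hI
  rw [hS, hI, hxy.sirRate_eq (right_mem_Icc.2 ht)] at hrel
  have hy := (hxy.snd_pos t₁ (right_mem_Icc.2 ht)).ne'
  unfold sirInvariant at hrel
  field_simp at hrel ⊢
  linear_combination hrel

theorem sensitivity_formulas_general (γ σi ti ti1 xi yi : ℝ)
    (hγ : 0 < γ) (hxi : 0 < xi) (hyi : 0 < yi)
    (Ψ₁ Ψ₂ : ℝ → ℝ → ℝ → ℝ → ℝ)
    (hinit : ∀ a b : ℝ, Ψ₁ ti ti a b = a ∧ Ψ₂ ti ti a b = b)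
    (hode1 : ∀ a b : ℝ, 0 < a → 0 < b → ∀ s ∈ Set.Icc ti ti1,
      HasDerivAt (fun u => Ψ₁ u ti a b) (-(γ * σi * Ψ₁ s ti a b * Ψ₂ s ti a b)) s)
    (hode2 : ∀ a b : ℝ, 0 < a → 0 < b → ∀ s ∈ Set.Icc ti ti1,
      HasDerivAt (fun u => Ψ₂ u ti a b) (γ * σi * Ψ₁ s ti a b * Ψ₂ s ti a b
        - γ * Ψ₂ s ti a b) s)
    (hpos : ∀ a b : ℝ, 0 < a → 0 < b → ∀ s ∈ Set.Icc ti ti1,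
      0 < Ψ₁ s ti a b ∧ 0 < Ψ₂ s ti a b)
    (hcons : ∀ a b : ℝ, 0 < a → 0 < b → ∀ s ∈ Set.Icc ti ti1,
      Ψ₁ s ti a b * Real.exp (-σi * (Ψ₁ s ti a b + Ψ₂ s ti a b))
        = a * Real.exp (-σi * (a + b)))
    (hdiff : ∀ s ∈ Set.Icc ti ti1, ∀ j : Fin 2,
      Differentiable ℝ (fun a => (if j = 0 then Ψ₁ else Ψ₂) s ti a yi) ∧
      Differentiable ℝ (fun b => (if j = 0 then Ψ₁ else Ψ₂) s ti xi b)) :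
    ∀ s ∈ Set.Icc ti ti1,
      (deriv (fun a => Ψ₁ s ti a yi) xi - deriv (fun b => Ψ₁ s ti xi b) yi)
        = Ψ₁ s ti xi yi / xi +
          γ * σi * (Ψ₁ s ti xi yi * Ψ₂ s ti xi yi / xi) *
            ∫ r in ti..s, Ψ₁ r ti xi yi / Ψ₂ r ti xi yi ∧
      (deriv (fun a => Ψ₁ s ti a yi) xi - deriv (fun b => Ψ₁ s ti xi b) yi)
        + (deriv (fun a => Ψ₂ s ti a yi) xi - deriv (fun b => Ψ₂ s ti xi b) yi)
        = Ψ₂ s ti xi yi / xi * γ * ∫ r in ti..s, Ψ₁ r ti xi yi / Ψ₂ r ti xi yi := by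
  intro s hs
  have hsub : Icc ti s ⊆ Icc ti ti1 := Icc_subset_Icc_right hs.2
  have harc : ∀ a b, 0 < a → 0 < b →
      IsSIRArc γ σi (sirInvariant σi a b) ti s (Ψ₁ · ti a b) (Ψ₂ · ti a b) := fun a b ha hb =>
    ⟨fun r hr => hode1 a b ha hb r (hsub hr), fun r hr => hode2 a b ha hb r (hsub hr),
      fun r hr => hcons a b ha hb r (hsub hr), fun r hr => (hpos a b ha hb r (hsub hr)).2⟩
  have hstart (a b : ℝ) : Ψ₁ ti ti a b + Ψ₂ ti ti a b = a + b := by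
    rw [(hinit a b).1, (hinit a b).2]
  have hnear : ∀ᶠ p : ℝ × ℝ in 𝓝 (xi, yi), 0 < p.1 ∧ 0 < p.2 :=
    prod_mem_nhds (Ioi_mem_nhds hxi) (Ioi_mem_nhds hyi)
  obtain ⟨h1a, h1b⟩ : Differentiable ℝ (Ψ₁ s ti · yi) ∧ Differentiable ℝ (Ψ₁ s ti xi ·) := by
    simpa using hdiff s hs 0
  obtain ⟨h2a, h2b⟩ : Differentiable ℝ (Ψ₂ s ti · yi) ∧ Differentiable ℝ (Ψ₂ s ti xi ·) := by
    simpa using hdiff s hs 1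
  have hSa := (h1a xi).hasDerivAt.add (h2a xi).hasDerivAt
  have hSb := (h1b yi).hasDerivAt.add (h2b yi).hasDerivAt
  have hsum := (harc xi yi hxi hyi).sub_eq_mul_integral_div
    (S := fun a b => Ψ₁ s ti a b + Ψ₂ s ti a b) hγ.ne' hs.1 hxi.ne' (hstart xi yi) rfl
    (hnear.mono fun p hp => by
      simpa only [hstart] using (harc p.1 p.2 hp.1 hp.2).integral_inv_sirRate hγ.ne' hs.1)
    hSa hSb
  have hu := sub_eq_of_mul_exp_eq_sirInvariant (X := fun a b => Ψ₁ s ti a b)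
    (S := fun a b => Ψ₁ s ti a b + Ψ₂ s ti a b) hxi.ne'
    (hnear.mono fun p hp => hcons p.1 p.2 hp.1 hp.2 s hs) (h1a xi).hasDerivAt (h1b yi).hasDerivAt
    hSa hSb
  exact ⟨by linear_combination hu + σi * Ψ₁ s ti xi yi * hsum, by linear_combination hsum⟩

/-- Explicit formulas for the sensitivities u_i(s) = ∂Ψ₁/∂x_i − ∂Ψ₁/∂y_i and
u_i(s)+v_i(s) of the SIR flow with constant control σᵢ. -/
theorem sensitivity_formulas (γ σi ti ti1 xi yi : ℝ)
    (hγ : 0 < γ) (hσi : 0 ≤ σi) (hti : ti < ti1) (hxi : 0 < xi) (hyi : 0 < yi)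
    (Ψ₁ Ψ₂ : ℝ → ℝ → ℝ → ℝ → ℝ)
    (hinit : ∀ a b : ℝ, Ψ₁ ti ti a b = a ∧ Ψ₂ ti ti a b = b)
    (hode1 : ∀ a b : ℝ, 0 < a → 0 < b → ∀ s ∈ Set.Icc ti ti1,
      HasDerivAt (fun u => Ψ₁ u ti a b) (-(γ * σi * Ψ₁ s ti a b * Ψ₂ s ti a b)) s)
    (hode2 : ∀ a b : ℝ, 0 < a → 0 < b → ∀ s ∈ Set.Icc ti ti1,
      HasDerivAt (fun u => Ψ₂ u ti a b) (γ * σi * Ψ₁ s ti a b * Ψ₂ s ti a b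
        - γ * Ψ₂ s ti a b) s)
    (hpos : ∀ a b : ℝ, 0 < a → 0 < b → ∀ s ∈ Set.Icc ti ti1,
      0 < Ψ₁ s ti a b ∧ 0 < Ψ₂ s ti a b)
    (hcons : ∀ a b : ℝ, 0 < a → 0 < b → ∀ s ∈ Set.Icc ti ti1,
      Ψ₁ s ti a b * Real.exp (-σi * (Ψ₁ s ti a b + Ψ₂ s ti a b))
        = a * Real.exp (-σi * (a + b)))
    (hdiff : ∀ s ∈ Set.Icc ti ti1, ∀ j : Fin 2,
      Differentiable ℝ (fun a => (if j = 0 then Ψ₁ else Ψ₂) s ti a yi) ∧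
      Differentiable ℝ (fun b => (if j = 0 then Ψ₁ else Ψ₂) s ti xi b)) :
    ∀ s ∈ Set.Icc ti ti1,
      (deriv (fun a => Ψ₁ s ti a yi) xi - deriv (fun b => Ψ₁ s ti xi b) yi)
        = Ψ₁ s ti xi yi / xi +
          γ * σi * (Ψ₁ s ti xi yi * Ψ₂ s ti xi yi / xi) *
            ∫ r in ti..s, Ψ₁ r ti xi yi / Ψ₂ r ti xi yi ∧
      (deriv (fun a => Ψ₁ s ti a yi) xi - deriv (fun b => Ψ₁ s ti xi b) yi)
        + (deriv (fun a => Ψ₂ s ti a yi) xi - deriv (fun b => Ψ₂ s ti xi b) yi)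
        = Ψ₂ s ti xi yi / xi * γ * ∫ r in ti..s, Ψ₁ r ti xi yi / Ψ₂ r ti xi yi :=
  sensitivity_formulas_general γ σi ti ti1 xi yi hγ hxi hyi Ψ₁ Ψ₂ hinit hode1 hode2 hpos hcons hdiff
end

section
/- In the setting of the auxiliary functions of the z-monotonicity lemma, if x + y is decreasing and there exists s₃ ∈ [t, t+τ] with σ₀x(s₃) + σ₀y(s₃) = 1, then g_t(s) = σ₀σ₁x(s)y(s) + (σ₀x(s)−1)(σ₁x(s)−1) attains its global minimum on [t, t+τ] at s₃ with g_t(s₃) = σ₀ y(s₃) > 0; in particular g_t(s) > 0 for all s ∈ [t, t+τ]. -/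
/-!
Along the flow, `g_t' = -γ σ₁² x y (σ₀ (x + y) - 1)`. Since `x + y` is strictly decreasing and
`σ₀ (x + y) = 1` at `s₃`, the last factor is positive before `s₃` and negative after it, so `g_t`
decreases up to `s₃` and increases afterwards. At `s₃` we have `σ₀ x - 1 = -σ₀ y`, which turns
`g_t(s₃)` into `σ₀ y(s₃) > 0`.
-/

open Set

theorem isMinOn_Icc_of_hasDerivAt {f f' : ℝ → ℝ} {a b c : ℝ} (hc : c ∈ Icc a b)
    (hf : ∀ s ∈ Icc a b, HasDerivAt f (f' s) s)
    (hf'_nonpos : ∀ s ∈ Ioo a c, f' s ≤ 0) (hf'_nonneg : ∀ s ∈ Ioo c b, 0 ≤ f' s) :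
    IsMinOn f (Icc a b) c := by
  have hcont : ContinuousOn f (Icc a b) := fun s hs => (hf s hs).continuousAt.continuousWithinAt
  have hleft : Icc a c ⊆ Icc a b := Icc_subset_Icc_right hc.2
  have hright : Icc c b ⊆ Icc a b := Icc_subset_Icc_left hc.1
  have hanti : AntitoneOn f (Icc a c) := by
    refine antitoneOn_of_hasDerivWithinAt_nonpos (f' := f') (convex_Icc a c) (hcont.mono hleft) ?_ ?_ <;>
      rw [interior_Icc]
    · exact fun s hs => (hf s (hleft (Ioo_subset_Icc_self hs))).hasDerivWithinAt
    · exact hf'_nonpos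
  have hmono : MonotoneOn f (Icc c b) := by
    refine monotoneOn_of_hasDerivWithinAt_nonneg (f' := f') (convex_Icc c b) (hcont.mono hright) ?_ ?_ <;>
      rw [interior_Icc]
    · exact fun s hs => (hf s (hright (Ioo_subset_Icc_self hs))).hasDerivWithinAt
    · exact hf'_nonneg
  intro s hs
  rcases le_total s c with h | h
  · exact hanti ⟨hs.1, h⟩ ⟨hc.1, le_rfl⟩ h
  · exact hmono ⟨le_rfl, hc.2⟩ ⟨h, hs.2⟩ h

/-- The function `g_t` of the paper. -/
def sirG (σ₀ σ₁ : ℝ) (x y : ℝ → ℝ) (s : ℝ) : ℝ :=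
  σ₀ * σ₁ * x s * y s + (σ₀ * x s - 1) * (σ₁ * x s - 1)

theorem hasDerivAt_sirG {γ σ₀ σ₁ s : ℝ} {x y : ℝ → ℝ}
    (hx : HasDerivAt x (-(γ * σ₁ * x s * y s)) s)
    (hy : HasDerivAt y (γ * σ₁ * x s * y s - γ * y s) s) :
    HasDerivAt (sirG σ₀ σ₁ x y) (-(γ * σ₁ ^ 2 * x s * y s * (σ₀ * (x s + y s) - 1))) s := by
  refine (((hx.const_mul (σ₀ * σ₁)).mul hy).add
    (((hx.const_mul σ₀).sub_const 1).mul ((hx.const_mul σ₁).sub_const 1))).congr_deriv ?_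
  ring

theorem sirG_eq_of_add_eq_one {σ₀ σ₁ s : ℝ} {x y : ℝ → ℝ} (h : σ₀ * x s + σ₀ * y s = 1) :
    sirG σ₀ σ₁ x y s = σ₀ * y s := by
  unfold sirG
  linear_combination (σ₁ * x s - 1) * h

theorem g_minimum_positive_general (γ σ₀ σ₁ t τ s₃ : ℝ)
    (hγ : 0 < γ) (hσ₀ : 0 < σ₀)
    (x y : ℝ → ℝ)
    (hx : ∀ s ∈ Set.Icc t (t + τ), HasDerivAt x (-(γ * σ₁ * x s * y s)) s)
    (hy : ∀ s ∈ Set.Icc t (t + τ), HasDerivAt y (γ * σ₁ * x s * y s - γ * y s) s)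
    (hpos : ∀ s ∈ Set.Icc t (t + τ), 0 < x s ∧ 0 < y s)
    (hanti : StrictAntiOn (fun s => x s + y s) (Set.Icc t (t + τ)))
    (hs₃ : s₃ ∈ Set.Icc t (t + τ))
    (hzero : σ₀ * x s₃ + σ₀ * y s₃ = 1) :
    (∀ s ∈ Set.Icc t (t + τ),
      σ₀ * σ₁ * x s₃ * y s₃ + (σ₀ * x s₃ - 1) * (σ₁ * x s₃ - 1) ≤
        σ₀ * σ₁ * x s * y s + (σ₀ * x s - 1) * (σ₁ * x s - 1)) ∧
    σ₀ * σ₁ * x s₃ * y s₃ + (σ₀ * x s₃ - 1) * (σ₁ * x s₃ - 1) = σ₀ * y s₃ ∧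
    (∀ s ∈ Set.Icc t (t + τ),
      0 < σ₀ * σ₁ * x s * y s + (σ₀ * x s - 1) * (σ₁ * x s - 1)) := by
  have hcoef : ∀ s ∈ Icc t (t + τ), 0 ≤ γ * σ₁ ^ 2 * x s * y s := fun s hs => by
    obtain ⟨hxs, hys⟩ := hpos s hs
    positivity
  have hlevel : σ₀ * (x s₃ + y s₃) = 1 := by rw [mul_add, hzero]
  have hmin : IsMinOn (sirG σ₀ σ₁ x y) (Icc t (t + τ)) s₃ := by
    refine isMinOn_Icc_of_hasDerivAt hs₃ (fun s hs => hasDerivAt_sirG (hx s hs) (hy s hs)) ?_ ?_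
    · intro s hs
      have hs' : s ∈ Icc t (t + τ) := ⟨hs.1.le, hs.2.le.trans hs₃.2⟩
      have : 1 < σ₀ * (x s + y s) := hlevel ▸ mul_lt_mul_of_pos_left (hanti hs' hs₃ hs.2) hσ₀
      exact neg_nonpos.2 (mul_nonneg (hcoef s hs') (by linarith))
    · intro s hs
      have hs' : s ∈ Icc t (t + τ) := ⟨hs₃.1.trans hs.1.le, hs.2.le⟩
      have : σ₀ * (x s + y s) < 1 := hlevel ▸ mul_lt_mul_of_pos_left (hanti hs₃ hs' hs.1) hσ₀
      exact neg_nonneg.2 (mul_nonpos_of_nonneg_of_nonpos (hcoef s hs') (by linarith))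
  have hval : sirG σ₀ σ₁ x y s₃ = σ₀ * y s₃ := sirG_eq_of_add_eq_one hzero
  have hval_pos : 0 < sirG σ₀ σ₁ x y s₃ := hval ▸ mul_pos hσ₀ (hpos s₃ hs₃).2
  exact ⟨fun s hs => hmin hs, hval, fun s hs => hval_pos.trans_le (hmin hs)⟩

/-- If x + y is decreasing and σ₀x(s₃) + σ₀y(s₃) = 1 for some s₃ ∈ [t,t+τ], then
g(s) = σ₀σ₁x(s)y(s) + (σ₀x(s)−1)(σ₁x(s)−1) attains its global minimum on [t,t+τ] at s₃,
with g(s₃) = σ₀ y(s₃) > 0; in particular g > 0 on [t,t+τ]. -/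
theorem g_minimum_positive (γ σ₀ σ₁ t τ s₃ : ℝ)
    (hγ : 0 < γ) (hσ₀ : 0 < σ₀) (h1 : 0 ≤ σ₁) (h10 : σ₁ < σ₀) (hτ : 0 < τ)
    (x y : ℝ → ℝ)
    (hx : ∀ s ∈ Set.Icc t (t + τ), HasDerivAt x (-(γ * σ₁ * x s * y s)) s)
    (hy : ∀ s ∈ Set.Icc t (t + τ), HasDerivAt y (γ * σ₁ * x s * y s - γ * y s) s)
    (hpos : ∀ s ∈ Set.Icc t (t + τ), 0 < x s ∧ 0 < y s)
    (hanti : StrictAntiOn (fun s => x s + y s) (Set.Icc t (t + τ)))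
    (hs₃ : s₃ ∈ Set.Icc t (t + τ))
    (hzero : σ₀ * x s₃ + σ₀ * y s₃ = 1) :
    (∀ s ∈ Set.Icc t (t + τ),
      σ₀ * σ₁ * x s₃ * y s₃ + (σ₀ * x s₃ - 1) * (σ₁ * x s₃ - 1) ≤
        σ₀ * σ₁ * x s * y s + (σ₀ * x s - 1) * (σ₁ * x s - 1)) ∧
    σ₀ * σ₁ * x s₃ * y s₃ + (σ₀ * x s₃ - 1) * (σ₁ * x s₃ - 1) = σ₀ * y s₃ ∧
    (∀ s ∈ Set.Icc t (t + τ),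
      0 < σ₀ * σ₁ * x s * y s + (σ₀ * x s - 1) * (σ₁ * x s - 1)) :=
  g_minimum_positive_general γ σ₀ σ₁ t τ s₃ hγ hσ₀ x y hx hy hpos hanti hs₃ hzero
end

section
/- If κ > x_∞γy_{t₁,η}(T)/(1−σ₀x_∞) · (1 − γy₂∫_{t₂}^T (σ₀x_{t₁,η}(r)−1)/y_{t₁,η}(r) dr) for all (t₁, η) ∈ R, then ∂J/∂η < 0 on all of R, and hence the optimal control for the problem with cost x_∞ + κ∫σ is σ* ≡ σ₂ (no strict quarantine). -/
/-!
∂J/∂η factors as (σ₂ − σ₁)·(B − κ), where B is the marginal benefit bounded by κ, so it is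
negative on R. Each vertical segment {t₁} × [0, η] lies in R, so J decreases in η along it and
J(t₁, η) ≤ J(t₁, 0), which by the constancy of J on the lower boundary equals J(0, 0).
-/

open Set

lemma antitoneOn_of_hasDerivAt_nonpos {D : Set ℝ} (hD : Convex ℝ D) {f f' : ℝ → ℝ}
    (hf : ∀ x ∈ D, HasDerivAt f (f' x) x) (hf'₀ : ∀ x ∈ D, f' x ≤ 0) : AntitoneOn f D :=
  antitoneOn_of_hasDerivWithinAt_nonpos hD
    (fun x hx ↦ (hf x hx).continuousAt.continuousWithinAt)
    (fun x hx ↦ (hf x (interior_subset hx)).hasDerivWithinAt)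
    (fun x hx ↦ hf'₀ x (interior_subset hx))

theorem no_strict_quarantine_optimal_general (γ σ₀ σ₁ σ₂ κ τ T : ℝ)
    (h12 : σ₁ < σ₂)
    (X Y : ℝ → ℝ → ℝ → ℝ) (xinf : ℝ → ℝ → ℝ) (J : ℝ → ℝ → ℝ)
    -- κ dominates the marginal benefit of the strict quarantine on all of R
    (hκbig : ∀ t₁ η, 0 ≤ η → η ≤ τ → 0 ≤ t₁ → t₁ ≤ T - η →
      xinf (X t₁ η T) (Y t₁ η T) * γ * Y t₁ η T /
          (1 - σ₀ * xinf (X t₁ η T) (Y t₁ η T)) *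
        (1 - γ * Y t₁ η (t₁ + η) *
          ∫ r in (t₁ + η)..T, (σ₀ * X t₁ η r - 1) / Y t₁ η r) < κ)
    -- formula for ∂J/∂η
    (hJder : ∀ t₁ η, 0 ≤ η → η ≤ τ → 0 ≤ t₁ → t₁ ≤ T - η →
      HasDerivAt (fun e => J t₁ e)
        (xinf (X t₁ η T) (Y t₁ η T) * γ * (σ₂ - σ₁) * Y t₁ η T /
            (1 - σ₀ * xinf (X t₁ η T) (Y t₁ η T)) *
          (1 - γ * Y t₁ η (t₁ + η) *
            ∫ r in (t₁ + η)..T, (σ₀ * X t₁ η r - 1) / Y t₁ η r)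
          - κ * (σ₂ - σ₁)) η)
    -- on the lower boundary η = 0, J is constant in t₁
    (hconst : ∀ t₁ t₁' : ℝ, J t₁ 0 = J t₁' 0) :
    ∀ t₁ η, 0 ≤ η → η ≤ τ → 0 ≤ t₁ → t₁ ≤ T - η →
      (xinf (X t₁ η T) (Y t₁ η T) * γ * (σ₂ - σ₁) * Y t₁ η T /
            (1 - σ₀ * xinf (X t₁ η T) (Y t₁ η T)) *
          (1 - γ * Y t₁ η (t₁ + η) *
            ∫ r in (t₁ + η)..T, (σ₀ * X t₁ η r - 1) / Y t₁ η r)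
          - κ * (σ₂ - σ₁) < 0) ∧
      J t₁ η ≤ J 0 0 := by
  have hneg : ∀ t₁ η, 0 ≤ η → η ≤ τ → 0 ≤ t₁ → t₁ ≤ T - η →
      xinf (X t₁ η T) (Y t₁ η T) * γ * (σ₂ - σ₁) * Y t₁ η T /
            (1 - σ₀ * xinf (X t₁ η T) (Y t₁ η T)) *
          (1 - γ * Y t₁ η (t₁ + η) *
            ∫ r in (t₁ + η)..T, (σ₀ * X t₁ η r - 1) / Y t₁ η r)
          - κ * (σ₂ - σ₁) < 0 := fun t₁ η hη₀ hητ ht₁ ht₁T ↦ by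
    linear_combination mul_lt_mul_of_pos_right (hκbig t₁ η hη₀ hητ ht₁ ht₁T) (sub_pos.2 h12)
  intro t₁ η hη₀ hητ ht₁ ht₁T
  refine ⟨hneg t₁ η hη₀ hητ ht₁ ht₁T, ?_⟩
  have hanti : AntitoneOn (J t₁) (Icc 0 η) :=
    antitoneOn_of_hasDerivAt_nonpos (convex_Icc 0 η)
      (fun e he ↦ hJder t₁ e he.1 (he.2.trans hητ) ht₁ (by linarith [he.2]))
      (fun e he ↦ (hneg t₁ e he.1 (he.2.trans hητ) ht₁ (by linarith [he.2])).le)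
  calc J t₁ η ≤ J t₁ 0 := hanti (left_mem_Icc.2 hη₀) (right_mem_Icc.2 hη₀) hη₀
    _ = J 0 0 := hconst t₁ 0

/-- If κ exceeds x_∞γy(T)/(1−σ₀x_∞)·(1 − γy₂∫_{t₂}^T(σ₀x−1)/y) for all (t₁,η) ∈ R, then
∂J/∂η < 0 on all of R, and hence the optimal control is σ* ≡ σ₂ (no strict quarantine):
the cost is maximized at η = 0. -/
theorem no_strict_quarantine_optimal (γ σ₀ σ₁ σ₂ κ τ T : ℝ)
    (hγ : 0 < γ) (hσ₀ : 0 < σ₀) (h1 : 0 ≤ σ₁) (h12 : σ₁ < σ₂) (h2 : σ₂ ≤ σ₀)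
    (hτ : 0 < τ) (hτT : τ < T) (hκ : 0 < κ)
    (X Y : ℝ → ℝ → ℝ → ℝ) (xinf : ℝ → ℝ → ℝ) (J : ℝ → ℝ → ℝ)
    (hpos : ∀ t₁ η, ∀ s ∈ Set.Icc (0:ℝ) T, 0 < X t₁ η s ∧ 0 < Y t₁ η s)
    (hxinf : ∀ a b : ℝ, 0 < a → 0 < b →
      xinf a b ∈ Set.Ioo 0 (1/σ₀) ∧
      xinf a b * Real.exp (-σ₀ * xinf a b) = a * Real.exp (-σ₀ * (a + b)))
    -- cost functional
    (hJ : ∀ t₁ η, J t₁ η = xinf (X t₁ η T) (Y t₁ η T) + κ * (σ₁ * η + σ₂ * (T - η)))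
    -- κ dominates the marginal benefit of the strict quarantine on all of R
    (hκbig : ∀ t₁ η, 0 ≤ η → η ≤ τ → 0 ≤ t₁ → t₁ ≤ T - η →
      xinf (X t₁ η T) (Y t₁ η T) * γ * Y t₁ η T /
          (1 - σ₀ * xinf (X t₁ η T) (Y t₁ η T)) *
        (1 - γ * Y t₁ η (t₁ + η) *
          ∫ r in (t₁ + η)..T, (σ₀ * X t₁ η r - 1) / Y t₁ η r) < κ)
    -- formula for ∂J/∂η
    (hJder : ∀ t₁ η, 0 ≤ η → η ≤ τ → 0 ≤ t₁ → t₁ ≤ T - η →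
      HasDerivAt (fun e => J t₁ e)
        (xinf (X t₁ η T) (Y t₁ η T) * γ * (σ₂ - σ₁) * Y t₁ η T /
            (1 - σ₀ * xinf (X t₁ η T) (Y t₁ η T)) *
          (1 - γ * Y t₁ η (t₁ + η) *
            ∫ r in (t₁ + η)..T, (σ₀ * X t₁ η r - 1) / Y t₁ η r)
          - κ * (σ₂ - σ₁)) η)
    -- on the lower boundary η = 0, J is constant in t₁
    (hconst : ∀ t₁ t₁' : ℝ, J t₁ 0 = J t₁' 0) :
    ∀ t₁ η, 0 ≤ η → η ≤ τ → 0 ≤ t₁ → t₁ ≤ T - η →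
      (xinf (X t₁ η T) (Y t₁ η T) * γ * (σ₂ - σ₁) * Y t₁ η T /
            (1 - σ₀ * xinf (X t₁ η T) (Y t₁ η T)) *
          (1 - γ * Y t₁ η (t₁ + η) *
            ∫ r in (t₁ + η)..T, (σ₀ * X t₁ η r - 1) / Y t₁ η r)
          - κ * (σ₂ - σ₁) < 0) ∧
      J t₁ η ≤ J 0 0 :=
  no_strict_quarantine_optimal_general γ σ₀ σ₁ σ₂ κ τ T h12 X Y xinf J hκbig hJder hconst
end
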